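/- Let G be a string over the four-letter alphabet Fin 4 and let k ≥ 1 be such that every string of length k over Fin 4 occurs in G. Then every string α over Fin 4 with |α| < k that occurs in G satisfies mult_G(α) ≥ 4; in particular every occurring string shorter than the maximal complete length is a repeat of G. -/

import Mathlib

/-!
Given a letter `c`, pad `c :: α` on the right to length `k`; that string occurs in `G`, so `α`
occurs at a position immediately preceded by `c`. Distinct letters give distinct positions, so
`α` occurs at least as often as there are letters.
-/

/-- The multiplicity of `α` in `G`: the number of positions `i` such that the
contiguous substring of `G` of length `|α|` starting at `i` equals `α`. -/
def mult {A : Type*} [DecidableEq A] (G α : List A) : ℕ :=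
  ((Finset.range (G.length + 1)).filter
    (fun i => i + α.length ≤ G.length ∧ (G.drop i).take α.length = α)).card

namespace List

variable {A : Type*} {G α : List A} {i : ℕ}

theorem isPrefix_drop_iff (hi : i ≤ G.length) :
    α <+: G.drop i ↔ i + α.length ≤ G.length ∧ (G.drop i).take α.length = α := by
  rw [prefix_iff_eq_take, eq_comm, iff_and_self]
  intro h
  have hlen := congrArg length h
  simp only [length_take, length_drop] at hlen
  omega

theorem isPrefix_drop_succ_of_cons_isPrefix {c : A} (h : c :: α <+: G.drop i) :
    α <+: G.drop (i + 1) ∧ G[i]? = some c := by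
  obtain ⟨t, ht⟩ := h
  have hG : G.drop i = c :: (α ++ t) := ht.symm
  refine ⟨⟨t, ?_⟩, ?_⟩
  · rw [← drop_drop, hG, drop_one, tail_cons]
  · rw [← head?_drop, hG, head?_cons]

end List

open Finset

variable {A : Type*} [DecidableEq A]

theorem mult_eq_card_filter_isPrefix (G α : List A) :
    mult G α = #{i ∈ range (G.length + 1) | α <+: G.drop i} := by
  refine congrArg card (filter_congr fun i hi => ?_)
  exact (List.isPrefix_drop_iff (Nat.lt_succ_iff.mp (mem_range.mp hi))).symm

theorem exists_isPrefix_drop_of_one_le_mult {G α : List A} (h : 1 ≤ mult G α) :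
    ∃ i, α <+: G.drop i := by
  rw [mult_eq_card_filter_isPrefix] at h
  obtain ⟨i, hi⟩ := card_pos.mp h
  exact ⟨i, (mem_filter.mp hi).2⟩

theorem card_le_mult_of_forall_length_eq {G α : List A} {k : ℕ} [Fintype A]
    (hcomplete : ∀ β : List A, β.length = k → 1 ≤ mult G β) (hα : α.length < k) :
    Fintype.card A ≤ mult G α := by
  have extend (c : A) : ∃ i, α <+: G.drop (i + 1) ∧ G[i]? = some c := by
    let β := c :: α ++ List.replicate (k - 1 - α.length) c
    obtain ⟨i, hi⟩ := exists_isPrefix_drop_of_one_le_mult (hcomplete β (by simp [β]; omega))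
    exact ⟨i, List.isPrefix_drop_succ_of_cons_isPrefix ((List.prefix_append _ _).trans hi)⟩
  choose pos hpos hletter using extend
  have pos_inj : (fun c => pos c + 1).Injective := fun c c' h => by
    simpa [Nat.succ_inj.mp h, hletter c'] using (hletter c).symm
  rw [mult_eq_card_filter_isPrefix, ← card_univ, ← card_image_of_injective _ pos_inj]
  refine card_le_card fun j hj => ?_
  obtain ⟨c, -, rfl⟩ := mem_image.mp hj
  have pos_lt := (List.getElem?_eq_some_iff.mp (hletter c)).1
  exact mem_filter.mpr ⟨mem_range.mpr (by omega), hpos c⟩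

theorem short_strings_are_repeats_general (G : List (Fin 4)) (k : ℕ)
    (hcomplete : ∀ α : List (Fin 4), α.length = k → 1 ≤ mult G α) :
    ∀ α : List (Fin 4), α.length < k → 1 ≤ mult G α → 4 ≤ mult G α := fun _ hα _ => by
  simpa using card_le_mult_of_forall_length_eq hcomplete hα

/-- If every string of length `k ≥ 1` over the four-letter alphabet occurs in
`G`, then every occurring string strictly shorter than `k` has multiplicity at
least 4; in particular every occurring string shorter than the maximal
complete length is a repeat. -/
theorem short_strings_are_repeats (G : List (Fin 4)) (k : ℕ) (hk : 1 ≤ k)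
    (hcomplete : ∀ α : List (Fin 4), α.length = k → 1 ≤ mult G α) :
    ∀ α : List (Fin 4), α.length < k → 1 ≤ mult G α → 4 ≤ mult G α :=
  short_strings_are_repeats_general G k hcomplete
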